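/- arXiv:2402.11039 — 3 statements merged into one kernel-verified Lean document; each statement's English description precedes it below -/
import Mathlib

section
/- For π₀ ∈ (0,1/4), the function p ↦ π_DS^{(p)} := (1−p)π₀/(4π₀^{(p)}) + pπ₀/(4(1/2 − π₀^{(p)})), with π₀^{(p)} = (1−p)π₀ + p(1/2 − π₀), is strictly decreasing on [0, 1/2]. -/
theorem ds_prior_strict_anti (pi0 : ℝ) (hpi0 : pi0 ∈ Set.Ioo (0:ℝ) (1/4))
    (noisy : ℝ → ℝ) (hnoisy : ∀ p, noisy p = (1-p)*pi0 + p*(1/2 - pi0))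
    (piDS : ℝ → ℝ)
    (hpiDS : ∀ p, piDS p = (1-p)*pi0/(4*noisy p) + p*pi0/(4*(1/2 - noisy p))) :
    StrictAntiOn piDS (Set.Icc 0 (1/2)) := by
  obtain ⟨hq0, hq4⟩ := hpi0
  intro a ha b hb hab
  obtain ⟨ha0, ha2⟩ := ha
  obtain ⟨hb0, hb2⟩ := hb
  rw [hpiDS, hpiDS, hnoisy, hnoisy]
  have hna : (0:ℝ) < (1-a)*pi0 + a*(1/2 - pi0) := by nlinarith
  have hna' : (0:ℝ) < 1/2 - ((1-a)*pi0 + a*(1/2 - pi0)) := by nlinarith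
  have hnb : (0:ℝ) < (1-b)*pi0 + b*(1/2 - pi0) := by nlinarith
  have hnb' : (0:ℝ) < 1/2 - ((1-b)*pi0 + b*(1/2 - pi0)) := by nlinarith
  rw [div_add_div _ _ (by positivity) (by positivity),
      div_add_div _ _ (by positivity) (by positivity),
      div_lt_div_iff₀ (by positivity) (by positivity)]
  have key : (0:ℝ) < (b-a) * (1-a-b) * (1/4-pi0) * (1/2-pi0) * pi0 := by
    apply mul_pos (mul_pos (mul_pos (mul_pos (by linarith) (by linarith)) (by linarith)) (by linarith)) hq0
  nlinarith [key, sq_nonneg (a-b), sq_nonneg pi0, mul_pos hna hnb, mul_pos hna' hnb']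
end

section
/- Composing the previous monotonicity facts: for fixed D > 0, C > 0 and strictly increasing Φ, the map π ↦ Φ((D² − ĉ(π)C²)/(2√(D² + ĉ(π)²C²))) with ĉ(π) = (1−4π)/(1 + 2π(1−2π)C²) is strictly increasing in π on [0, 1/4], and attains its maximum Φ(D/2) at π = 1/4. -/
private lemma key_anti (a b c1 c2 : ℝ) (ha : 0 < a) (hb : 0 < b)
    (h1 : 0 ≤ c1) (h : c1 < c2) :
    (a - c2*b)/(2*Real.sqrt (a + c2^2*b)) < (a - c1*b)/(2*Real.sqrt (a + c1^2*b)) := by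
  have h2 : 0 ≤ c2 := le_of_lt (lt_of_le_of_lt h1 h)
  have hp1 : 0 < a + c1^2*b := by nlinarith [sq_nonneg c1]
  have hp2 : 0 < a + c2^2*b := by nlinarith [sq_nonneg c2]
  have hs1 : 0 < Real.sqrt (a + c1^2*b) := Real.sqrt_pos.2 hp1
  have hs2 : 0 < Real.sqrt (a + c2^2*b) := Real.sqrt_pos.2 hp2
  have hq1 : (Real.sqrt (a + c1^2*b))^2 = a + c1^2*b := Real.sq_sqrt (le_of_lt hp1)
  have hq2 : (Real.sqrt (a + c2^2*b))^2 = a + c2^2*b := Real.sq_sqrt (le_of_lt hp2)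
  rw [div_lt_div_iff₀ (by linarith) (by linarith)]
  set S1 := Real.sqrt (a + c1^2*b) with hS1
  set S2 := Real.sqrt (a + c2^2*b) with hS2
  rcases le_or_gt 0 (a - c2*b) with hN2 | hN2
  · -- both numerators nonneg
    have hN1 : 0 ≤ a - c1*b := by nlinarith
    have hnn : 0 ≤ (a - c1*b) * (2*S2) := by positivity
    refine lt_of_pow_lt_pow_left₀ 2 hnn ?_
    have e1 : ((a - c2*b) * (2*S1))^2 = (a - c2*b)^2 * 4 * (a + c1^2*b) := by
      rw [mul_pow, mul_pow]; rw [hq1]; ring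
    have e2 : ((a - c1*b) * (2*S2))^2 = (a - c1*b)^2 * 4 * (a + c2^2*b) := by
      rw [mul_pow, mul_pow]; rw [hq2]; ring
    rw [e1, e2]
    have hbr : 0 < a*(2+c1+c2) - b*(c1+c2+2*c1*c2) := by
      nlinarith [mul_pos hb (show 0 < c2 - c1 by linarith), mul_nonneg hb.le h1,
        mul_nonneg (mul_nonneg hb.le h2) (show 0 ≤ c2 - c1 by linarith)]
    nlinarith [mul_pos (mul_pos (mul_pos ha hb) (show 0 < c2 - c1 by linarith)) hbr]
  · rcases le_or_gt 0 (a - c1*b) with hN1 | hN1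
    · have : (a - c2*b) * (2*S1) < 0 := mul_neg_of_neg_of_pos hN2 (by linarith)
      have : 0 ≤ (a - c1*b) * (2*S2) := by positivity
      linarith
    · -- both negative
      have hneg2 : 0 ≤ -((a - c2*b) * (2*S1)) := by nlinarith
      have hsq : (-((a - c1*b) * (2*S2)))^2 < (-((a - c2*b) * (2*S1)))^2 := by
        have e1 : (-((a - c2*b) * (2*S1)))^2 = (a - c2*b)^2 * 4 * (a + c1^2*b) := by
          rw [neg_pow, mul_pow, mul_pow]; rw [hq1]; ring
        have e2 : (-((a - c1*b) * (2*S2)))^2 = (a - c1*b)^2 * 4 * (a + c2^2*b) := by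
          rw [neg_pow, mul_pow, mul_pow]; rw [hq2]; ring
        rw [e1, e2]
        have hbr : a*(2+c1+c2) - b*(c1+c2+2*c1*c2) < 0 := by
          nlinarith [mul_pos hb (show 0 < c2 - c1 by linarith), mul_nonneg hb.le h1,
            mul_nonneg (mul_nonneg hb.le h1) (show 0 ≤ c2 - c1 by linarith)]
        nlinarith [mul_pos (mul_pos (mul_pos ha hb) (show 0 < c2 - c1 by linarith))
          (show 0 < b*(c1+c2+2*c1*c2) - a*(2+c1+c2) by linarith)]
      have := lt_of_pow_lt_pow_left₀ 2 hneg2 hsq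
      linarith

theorem wga_strict_mono_in_prior (D C : ℝ) (hD : 0 < D) (hC : 0 < C)
    (Φ : ℝ → ℝ) (hΦ : StrictMono Φ)
    (chat : ℝ → ℝ) (hchat : ∀ p, chat p = (1 - 4*p)/(1 + 2*p*(1-2*p)*C^2))
    (F : ℝ → ℝ)
    (hF : ∀ p, F p = Φ ((D^2 - chat p * C^2)/(2*Real.sqrt (D^2 + (chat p)^2 * C^2)))) :
    StrictMonoOn F (Set.Icc 0 (1/4)) ∧ F (1/4) = Φ (D/2) ∧
    ∀ p ∈ Set.Icc (0:ℝ) (1/4), F p ≤ F (1/4) := by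
  have hC2 : 0 < C^2 := by positivity
  have hden : ∀ p ∈ Set.Icc (0:ℝ) (1/4), 0 < 1 + 2*p*(1-2*p)*C^2 := by
    rintro p ⟨hp0, hp1⟩
    nlinarith [mul_nonneg hp0 (by linarith : (0:ℝ) ≤ 1 - 2*p)]
  have hch_nonneg : ∀ p ∈ Set.Icc (0:ℝ) (1/4), 0 ≤ chat p := by
    rintro p ⟨hp0, hp1⟩
    rw [hchat]
    exact div_nonneg (by linarith) (le_of_lt (hden p ⟨hp0, hp1⟩))
  have hch_anti : ∀ p ∈ Set.Icc (0:ℝ) (1/4), ∀ q ∈ Set.Icc (0:ℝ) (1/4), p < q →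
      chat q < chat p := by
    rintro p ⟨hp0, hp1⟩ q ⟨hq0, hq1⟩ hpq
    rw [hchat, hchat]
    rw [div_lt_div_iff₀ (hden q ⟨hq0, hq1⟩) (hden p ⟨hp0, hp1⟩)]
    nlinarith [mul_pos hC2 (sub_pos.2 hpq), mul_nonneg (mul_nonneg hC2.le hp0) hq0,
      mul_nonneg hC2.le (mul_nonneg hp0 hq0)]
  have hmono : StrictMonoOn F (Set.Icc 0 (1/4)) := by
    intro p hp q hq hpq
    rw [hF, hF]
    exact hΦ (key_anti (D^2) (C^2) (chat q) (chat p) (by positivity) hC2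
      (hch_nonneg q hq) (hch_anti p hp q hq hpq))
  have hch14 : chat (1/4) = 0 := by rw [hchat]; norm_num
  have hF14 : F (1/4) = Φ (D/2) := by
    rw [hF, hch14]
    congr 1
    have hsq : Real.sqrt (D^2 + 0^2*C^2) = D := by
      rw [show D^2 + 0^2*C^2 = D^2 by ring, Real.sqrt_sq hD.le]
    rw [hsq]
    field_simp
    ring
  refine ⟨hmono, hF14, ?_⟩
  rintro p hp
  rcases eq_or_lt_of_le hp.2 with h | h
  · rw [h]
  · exact le_of_lt (hmono hp (by constructor <;> norm_num) h)
end

section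
/- Worst-group accuracy of downsampling under noise lies between that of ERM and noise-free downsampling: for π₀ ∈ (0,1/4] and p ∈ [0,1/2], with WGA(π) := Φ((D² − ĉ(π)C²)/(2√(D² + ĉ(π)²C²))), we have WGA(π₀) ≤ WGA(π_DS^{(p)}) ≤ WGA(1/4), with WGA(π_DS^{(p)}) = WGA(π₀) at p = 1/2 or π₀ = 1/4, and WGA(π_DS^{(p)}) = WGA(1/4) at p = 0. -/
private lemma le_of_sq_le_sq' {x y : ℝ} (hx : 0 ≤ x) (hy : 0 ≤ y)
    (h : x^2 ≤ y^2) : x ≤ y := by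
  have := Real.sqrt_le_sqrt h
  rwa [Real.sqrt_sq hx, Real.sqrt_sq hy] at this

/-- f(c) = (D² - cC²)/(2√(D² + c²C²)) is antitone on [0, ∞). -/
private lemma f_antitone (D C : ℝ) (hD : 0 < D) (hC : 0 < C) {c1 c2 : ℝ}
    (h2 : 0 ≤ c2) (h : c2 ≤ c1) :
    (D^2 - c1*C^2)/(2*Real.sqrt (D^2 + c1^2*C^2)) ≤
      (D^2 - c2*C^2)/(2*Real.sqrt (D^2 + c2^2*C^2)) := by
  have h1 : 0 ≤ c1 := le_trans h2 h
  have hpos1 : (0:ℝ) < D^2 + c1^2*C^2 := by positivity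
  have hpos2 : (0:ℝ) < D^2 + c2^2*C^2 := by positivity
  set s1 := Real.sqrt (D^2 + c1^2*C^2) with hs1def
  set s2 := Real.sqrt (D^2 + c2^2*C^2) with hs2def
  have hs1 : 0 < s1 := Real.sqrt_pos.mpr hpos1
  have hs2 : 0 < s2 := Real.sqrt_pos.mpr hpos2
  have hs1sq : s1^2 = D^2 + c1^2*C^2 := Real.sq_sqrt hpos1.le
  have hs2sq : s2^2 = D^2 + c2^2*C^2 := Real.sq_sqrt hpos2.le
  rw [div_le_div_iff₀ (by positivity) (by positivity)]
  -- goal : (D^2 - c1*C^2) * (2*s2) ≤ (D^2 - c2*C^2) * (2*s1)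
  have hs21 : s2 ≤ s1 := by
    apply le_of_sq_le_sq' hs2.le hs1.le
    rw [hs1sq, hs2sq]
    nlinarith [mul_le_mul_of_nonneg_right (mul_le_mul h h h2 h1) (sq_nonneg C)]
  by_cases hA2 : 0 ≤ D^2 - c2*C^2
  · by_cases hA1 : 0 ≤ D^2 - c1*C^2
    · have hA12 : D^2 - c1*C^2 ≤ D^2 - c2*C^2 := by nlinarith
      nlinarith [mul_le_mul hA12 hs21 hs2.le hA2]
    · push_neg at hA1
      nlinarith [mul_pos hs2 (by linarith : (0:ℝ) < c1*C^2 - D^2),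
        mul_nonneg hA2 hs1.le]
  · push_neg at hA2
    have hA1 : D^2 - c1*C^2 < 0 := by nlinarith
    -- both negative: compare squares
    have hsq : (c2*C^2 - D^2)^2 * s1^2 ≤ (c1*C^2 - D^2)^2 * s2^2 := by
      rw [hs1sq, hs2sq]
      have hd : D^2 < c2*C^2 := by linarith
      nlinarith [mul_nonneg (mul_nonneg (sub_nonneg.mpr h) (by positivity : (0:ℝ) ≤ D^2*C^2)) (mul_nonneg (mul_nonneg (sq_nonneg C) (sub_nonneg.mpr h)) (by linarith : (0:ℝ) ≤ 1 + c2)),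
        mul_nonneg (mul_nonneg (sub_nonneg.mpr h) (by positivity : (0:ℝ) ≤ D^2*C^2)) (mul_nonneg (by linarith : (0:ℝ) ≤ 2 + c1 + c2) (by linarith : (0:ℝ) ≤ c2*C^2 - D^2))]
    have hx : (0:ℝ) ≤ (c2*C^2 - D^2)*s1 := mul_nonneg (by linarith) hs1.le
    have hy : (0:ℝ) ≤ (c1*C^2 - D^2)*s2 := mul_nonneg (by linarith) hs2.le
    have hxy : ((c2*C^2 - D^2)*s1)^2 ≤ ((c1*C^2 - D^2)*s2)^2 := by
      calc ((c2*C^2 - D^2)*s1)^2 = (c2*C^2 - D^2)^2 * s1^2 := by ring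
        _ ≤ (c1*C^2 - D^2)^2 * s2^2 := hsq
        _ = ((c1*C^2 - D^2)*s2)^2 := by ring
    have key : (c2*C^2 - D^2)*s1 ≤ (c1*C^2 - D^2)*s2 := le_of_sq_le_sq' hx hy hxy
    nlinarith [key]

theorem wga_ds_between_erm_and_clean (D C : ℝ) (hD : 0 < D) (hC : 0 < C)
    (Φ : ℝ → ℝ) (hΦ : StrictMono Φ)
    (chat : ℝ → ℝ) (hchat : ∀ q, chat q = (1 - 4*q)/(1 + 2*q*(1-2*q)*C^2))
    (WGA : ℝ → ℝ)
    (hWGA : ∀ q, WGA q = Φ ((D^2 - chat q * C^2)/(2*Real.sqrt (D^2 + (chat q)^2 * C^2))))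
    (pi0 : ℝ) (hpi0 : pi0 ∈ Set.Ioc (0:ℝ) (1/4))
    (p : ℝ) (hp : p ∈ Set.Icc (0:ℝ) (1/2))
    (noisy : ℝ → ℝ) (hnoisy : ∀ q, noisy q = (1-q)*pi0 + q*(1/2 - pi0))
    (piDS : ℝ → ℝ)
    (hpiDS : ∀ q, piDS q = (1-q)*pi0/(4*noisy q) + q*pi0/(4*(1/2 - noisy q))) :
    WGA pi0 ≤ WGA (piDS p) ∧ WGA (piDS p) ≤ WGA (1/4) ∧
    ((p = 1/2 ∨ pi0 = 1/4) → WGA (piDS p) = WGA pi0) ∧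
    (p = 0 → WGA (piDS p) = WGA (1/4)) := by
  obtain ⟨ha0, ha4⟩ := hpi0
  obtain ⟨hp0, hp2⟩ := hp
  -- properties of noisy p
  have hn : noisy p = (1-p)*pi0 + p*(1/2 - pi0) := hnoisy p
  have hnpos : 0 < noisy p := by
    rw [hn]; nlinarith
  have hnle : noisy p ≤ 1/4 := by rw [hn]; nlinarith
  have hn2 : (0:ℝ) < 1/2 - noisy p := by linarith
  have hds : piDS p = (1-p)*pi0/(4*noisy p) + p*pi0/(4*(1/2 - noisy p)) := hpiDS p
  -- bounds on piDS p
  have hlo : pi0 ≤ piDS p := by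
    rw [hds]
    rw [div_add_div _ _ (by positivity) (by positivity), le_div_iff₀ (by positivity)]
    rw [hn]; nlinarith [sq_nonneg (1-2*p), mul_nonneg (sq_nonneg (1-2*p)) (mul_nonneg (by linarith : (0:ℝ) ≤ 1-2*pi0) (by linarith : (0:ℝ) ≤ 1-4*pi0))]
  have hhi : piDS p ≤ 1/4 := by
    rw [hds]
    rw [div_add_div _ _ (by positivity) (by positivity), div_le_iff₀ (by positivity)]
    rw [hn]; nlinarith [mul_nonneg (mul_nonneg hp0 (by linarith : (0:ℝ) ≤ 1-p)) (by linarith : (0:ℝ) ≤ 1-4*pi0)]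
  -- WGA monotone on [0,1/4]
  have hWGAmono : ∀ q1 q2 : ℝ, 0 ≤ q1 → q1 ≤ q2 → q2 ≤ 1/4 → WGA q1 ≤ WGA q2 := by
    intro q1 q2 hq1 hq12 hq2
    rw [hWGA q1, hWGA q2]
    apply hΦ.monotone
    have hden1 : (0:ℝ) < 1 + 2*q1*(1-2*q1)*C^2 := by
      have := mul_nonneg (mul_nonneg (by linarith : (0:ℝ) ≤ 2*q1)
        (by linarith : (0:ℝ) ≤ 1-2*q1)) (sq_nonneg C)
      nlinarith
    have hden2 : (0:ℝ) < 1 + 2*q2*(1-2*q2)*C^2 := by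
      have := mul_nonneg (mul_nonneg (by linarith : (0:ℝ) ≤ 2*q2)
        (by linarith : (0:ℝ) ≤ 1-2*q2)) (sq_nonneg C)
      nlinarith
    have hc2 : 0 ≤ chat q2 := by
      rw [hchat]; apply div_nonneg (by linarith) hden2.le
    have hcc : chat q2 ≤ chat q1 := by
      rw [hchat, hchat]
      rw [div_le_div_iff₀ hden2 hden1]
      nlinarith [mul_nonneg (mul_nonneg (sub_nonneg.mpr hq12) (mul_nonneg (by linarith : (0:ℝ) ≤ 1-2*q1) (by linarith : (0:ℝ) ≤ 1-2*q2))) (sq_nonneg C),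
        mul_nonneg (mul_nonneg (sub_nonneg.mpr hq12) (mul_nonneg (mul_nonneg hq1 (by linarith : (0:ℝ) ≤ q2)) (by norm_num : (0:ℝ) ≤ 4))) (sq_nonneg C)]
    exact f_antitone D C hD hC hc2 hcc
  refine ⟨hWGAmono pi0 (piDS p) ha0.le hlo (by linarith),
    hWGAmono (piDS p) (1/4) (by linarith) hhi le_rfl, ?_, ?_⟩
  · rintro (hpe | hae)
    · have hne : noisy p = 1/4 := by rw [hn, hpe]; ring
      have : piDS p = pi0 := by
        rw [hds, hne, hpe]; norm_num; ring
      rw [this]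
    · have hne : noisy p = 1/4 := by rw [hn, hae]; ring
      have : piDS p = pi0 := by
        rw [hds, hne, hae]
        norm_num
        ring
      rw [this, hae]
  · intro hpe
    have hne : noisy p = pi0 := by rw [hn, hpe]; ring
    have : piDS p = 1/4 := by
      rw [hds, hne, hpe]
      rw [show (1-(0:ℝ))*pi0 = pi0 by ring, show (4:ℝ)*pi0 = pi0*4 by ring,
        div_mul_eq_div_div, div_self ha0.ne']
      norm_num
    rw [this]
end
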